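/- Suppose ‖Q_0‖ ≤ C_max/(1 − β) and the parameter sequence satisfies |θ_n| ≤ 1 for all n, |θ_n| monotonically decreasing to zero, and ∑_{n=1}^{∞} α_n |θ_n| < ∞. Then the iterates of smooth two-step Q-learning are uniformly bounded: there exists a finite constant D, namely D = (C_max/(1 − β) + (log|A|)/(N(1 − β)))(1 + β|θ_0|) · ∏_{i=1}^{∞} (1 + α_i β² |θ_i|), such that ‖Q_n‖ ≤ D for all n ∈ ℕ. -/

import Mathlib

/-! The log-sum-exp term exceeds the max by at most `log |A| / N`, so an update maps a bound
`B` on `‖Q‖` to `max B ((1 - α) B + α (1 + β |θ|) (m + β B))` with `m = C + β log |A| / N`.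
The constant `G = (C + log |A| / N) / (1 - β)` satisfies `m + β G ≤ G`, so the first step
costs the factor `1 + β |θ₀|`. Once the bound `B` dominates `G (1 + β |θ₀|) ≥ G (1 + β |θₙ|)`
(`|θ|` is antitone), `(1 + β |θₙ|) m ≤ (1 - β) B` and each later step costs only the factor
`1 + αₙ β² |θₙ|`, whose infinite product converges. -/

open Finset Real Filter

variable {S A : Type*}

/-- Maximum norm `‖Q‖ = max_{(i,a)} |Q(i,a)|`. -/
noncomputable def maxNorm [Fintype S] [Fintype A] [Nonempty S] [Nonempty A]
    (Q : S × A → ℝ) : ℝ :=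
  Finset.univ.sup' Finset.univ_nonempty fun x => |Q x|

/-- One smooth two-step Q-learning (S-TSQL) update: the selected pair `sa` is updated
using rewards `c'`, `c''`, next states `j`, `k`, step size `α`, parameter `θ`, and the
log-sum-exp operator with parameter `N` in place of the max; all other entries stay
unchanged. -/
noncomputable def stsqlUpdate [Fintype A] [DecidableEq S] [DecidableEq A]
    (β N : ℝ) (Q : S × A → ℝ) (sa : S × A) (j k : S) (c' c'' α θ : ℝ) : S × A → ℝ :=
  fun x => if x = sa then
      (1 - α) * Q sa +
        α * (c' + (β / N) * Real.log (∑ b, Real.exp (N * Q (j, b)))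
          + β * θ * (c'' + (β / N) * Real.log (∑ e, Real.exp (N * Q (k, e)))))
    else Q x

lemma abs_le_maxNorm [Fintype S] [Fintype A] [Nonempty S] [Nonempty A]
    (Q : S × A → ℝ) (x : S × A) : |Q x| ≤ maxNorm Q :=
  le_sup' (fun y => |Q y|) (mem_univ x)

lemma maxNorm_le [Fintype S] [Fintype A] [Nonempty S] [Nonempty A]
    {Q : S × A → ℝ} {B : ℝ} (h : ∀ x, |Q x| ≤ B) : maxNorm Q ≤ B :=
  sup'_le _ _ fun x _ => h x

lemma abs_log_sum_exp_le [Fintype A] [Nonempty A] {N R : ℝ} (hN : 0 < N) {x : A → ℝ}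
    (hx : ∀ b, |x b| ≤ R) :
    |log (∑ b, exp (N * x b))| ≤ log (Fintype.card A) + N * R := by
  obtain ⟨b₀⟩ := ‹Nonempty A›
  have hNx : ∀ b, |N * x b| ≤ N * R := fun b => by
    rw [abs_mul, abs_of_pos hN]; exact mul_le_mul_of_nonneg_left (hx b) hN.le
  have hcard : (1 : ℝ) ≤ Fintype.card A := by exact_mod_cast Fintype.card_pos
  have hlower : exp (-(N * R)) ≤ ∑ b, exp (N * x b) := calc
    exp (-(N * R)) ≤ exp (N * x b₀) := exp_le_exp.2 (neg_le_of_abs_le (hNx b₀))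
    _ ≤ ∑ b, exp (N * x b) :=
      single_le_sum (f := fun b => exp (N * x b)) (fun b _ => (exp_pos _).le) (mem_univ b₀)
  have hupper : ∑ b, exp (N * x b) ≤ Fintype.card A * exp (N * R) := calc
    ∑ b, exp (N * x b) ≤ ∑ _b : A, exp (N * R) :=
      sum_le_sum fun b _ => exp_le_exp.2 (le_of_abs_le (hNx b))
    _ = Fintype.card A * exp (N * R) := by simp
  have hlog_lower := log_le_log (exp_pos _) hlower
  have hlog_upper := log_le_log ((exp_pos _).trans_le hlower) hupper
  rw [log_exp] at hlog_lower
  rw [log_mul (zero_lt_one.trans_le hcard).ne' (exp_pos _).ne', log_exp] at hlog_upper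
  rw [abs_le]
  constructor <;> linarith [log_nonneg hcard]

lemma abs_add_div_mul_log_sum_exp_le [Fintype A] [Nonempty A] {β N C R c : ℝ} (hβ : 0 ≤ β)
    (hN : 0 < N) (hc : |c| ≤ C) {x : A → ℝ} (hx : ∀ b, |x b| ≤ R) :
    |c + β / N * log (∑ b, exp (N * x b))| ≤ C + β * (log (Fintype.card A) / N) + β * R :=
  calc |c + β / N * log (∑ b, exp (N * x b))|
      ≤ |c| + β / N * |log (∑ b, exp (N * x b))| := by
        refine (abs_add_le _ _).trans_eq ?_
        rw [abs_mul, abs_of_nonneg (by positivity : 0 ≤ β / N)]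
    _ ≤ C + β / N * (log (Fintype.card A) + N * R) := by
        gcongr
        exact abs_log_sum_exp_le hN hx
    _ = C + β * (log (Fintype.card A) / N) + β * R := by field_simp; ring

lemma abs_one_sub_mul_add_mul_le {α β θ q u v B T : ℝ} (hα0 : 0 ≤ α) (hα1 : α ≤ 1)
    (hβ : 0 ≤ β) (hq : |q| ≤ B) (hu : |u| ≤ T) (hv : |v| ≤ T) :
    |(1 - α) * q + α * (u + β * θ * v)| ≤ (1 - α) * B + α * (1 + β * |θ|) * T := by
  have h1α : 0 ≤ 1 - α := sub_nonneg.2 hα1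
  have hinner : |u + β * θ * v| ≤ (1 + β * |θ|) * T := calc
    |u + β * θ * v| ≤ |u| + β * |θ| * |v| := by
      refine (abs_add_le _ _).trans_eq ?_
      rw [abs_mul, abs_mul, abs_of_nonneg hβ]
    _ ≤ T + β * |θ| * T := by gcongr
    _ = (1 + β * |θ|) * T := by ring
  calc |(1 - α) * q + α * (u + β * θ * v)|
      ≤ (1 - α) * |q| + α * |u + β * θ * v| := by
        refine (abs_add_le _ _).trans_eq ?_
        rw [abs_mul, abs_mul, abs_of_nonneg h1α, abs_of_nonneg hα0]
    _ ≤ (1 - α) * B + α * ((1 + β * |θ|) * T) := by gcongr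
    _ = (1 - α) * B + α * (1 + β * |θ|) * T := by ring

def stsqlStepBound (α β θ m B : ℝ) : ℝ :=
  max B ((1 - α) * B + α * (1 + β * |θ|) * (m + β * B))

lemma maxNorm_stsqlUpdate_le [Fintype S] [Fintype A] [Nonempty S] [Nonempty A]
    [DecidableEq S] [DecidableEq A] {β N C B α c' c'' : ℝ} (θ : ℝ) (hβ : 0 ≤ β) (hN : 0 < N)
    (hα0 : 0 ≤ α) (hα1 : α ≤ 1) (hc' : |c'| ≤ C) (hc'' : |c''| ≤ C) {Q : S × A → ℝ}
    (hQ : maxNorm Q ≤ B) (sa : S × A) (j k : S) :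
    maxNorm (stsqlUpdate β N Q sa j k c' c'' α θ) ≤
      stsqlStepBound α β θ (C + β * (log (Fintype.card A) / N)) B := by
  have hQx : ∀ x, |Q x| ≤ B := fun x => (abs_le_maxNorm Q x).trans hQ
  refine maxNorm_le fun x => ?_
  unfold stsqlUpdate stsqlStepBound
  split_ifs
  · exact le_max_of_le_right <| abs_one_sub_mul_add_mul_le hα0 hα1 hβ (hQx sa)
      (abs_add_div_mul_log_sum_exp_le hβ hN hc' fun b => hQx (j, b))
      (abs_add_div_mul_log_sum_exp_le hβ hN hc'' fun b => hQx (k, b))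
  · exact le_max_of_le_left (hQx x)

section stsqlStepBound

variable {α β θ m G : ℝ}

lemma stsqlStepBound_self_le (hα0 : 0 ≤ α) (hα1 : α ≤ 1) (hβ : 0 ≤ β)
    (hm : m ≤ (1 - β) * G) (hG : 0 ≤ G) :
    stsqlStepBound α β θ m G ≤ G * (1 + β * |θ|) := by
  have hβθ : 0 ≤ β * |θ| := by positivity
  refine max_le (le_mul_of_one_le_right hG (by linarith)) ?_
  have hmG : m + β * G ≤ G := by linarith
  calc (1 - α) * G + α * (1 + β * |θ|) * (m + β * G)
      ≤ (1 - α) * G + α * (1 + β * |θ|) * G := by gcongr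
    _ ≤ G * (1 + β * |θ|) := by nlinarith [mul_nonneg (sub_nonneg.2 hα1) (mul_nonneg hβθ hG)]

lemma stsqlStepBound_le_mul {B : ℝ} (hα0 : 0 ≤ α) (hβ0 : 0 ≤ β) (hβ1 : β ≤ 1)
    (hm : m ≤ (1 - β) * G) (hG : 0 ≤ G) (hB : G * (1 + β * |θ|) ≤ B) :
    stsqlStepBound α β θ m B ≤ B * (1 + α * β ^ 2 * |θ|) := by
  have hβθ : 0 ≤ β * |θ| := by positivity
  have hB0 : 0 ≤ B := (by positivity : 0 ≤ G * (1 + β * |θ|)).trans hB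
  refine max_le (le_mul_of_one_le_right hB0 (by simp only [le_add_iff_nonneg_right]; positivity)) ?_
  have hmB : (1 + β * |θ|) * m ≤ (1 - β) * B := calc
    (1 + β * |θ|) * m ≤ (1 + β * |θ|) * ((1 - β) * G) := by gcongr
    _ = (1 - β) * (G * (1 + β * |θ|)) := by ring
    _ ≤ (1 - β) * B := by gcongr
  calc (1 - α) * B + α * (1 + β * |θ|) * (m + β * B)
      = (1 - α) * B + α * ((1 + β * |θ|) * m) + α * β * B + α * β ^ 2 * |θ| * B := by ring
    _ ≤ (1 - α) * B + α * ((1 - β) * B) + α * β * B + α * β ^ 2 * |θ| * B := by gcongr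
    _ = B * (1 + α * β ^ 2 * |θ|) := by ring

end stsqlStepBound

lemma le_mul_prod_of_le_stsqlStepBound {b α θ : ℕ → ℝ} {β m G : ℝ} (hα0 : ∀ n, 0 ≤ α n)
    (hα1 : ∀ n, α n ≤ 1) (hβ0 : 0 ≤ β) (hβ1 : β ≤ 1) (hθ : Antitone fun n => |θ n|)
    (hm : m ≤ (1 - β) * G) (hG : 0 ≤ G) (hb0 : b 0 ≤ G)
    (hstep : ∀ n B, b n ≤ B → b (n + 1) ≤ stsqlStepBound (α n) β (θ n) m B) (n : ℕ) :
    b (n + 1) ≤ G * (1 + β * |θ 0|) * ∏ i ∈ range n, (1 + α (i + 1) * β ^ 2 * |θ (i + 1)|) := by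
  induction n with
  | zero => simpa using (hstep 0 _ hb0).trans (stsqlStepBound_self_le (hα0 0) (hα1 0) hβ0 hm hG)
  | succ n ih =>
    rw [prod_range_succ, ← mul_assoc]
    refine (hstep _ _ ih).trans (stsqlStepBound_le_mul (hα0 _) hβ0 hβ1 hm hG ?_)
    calc G * (1 + β * |θ (n + 1)|) ≤ G * (1 + β * |θ 0|) := by
          gcongr G * (1 + β * ?_); exact hθ (Nat.zero_le _)
      _ ≤ _ := le_mul_of_one_le_right (by positivity) <| one_le_prod fun i _ =>
          le_add_of_nonneg_right (by have := hα0 (i + 1); positivity)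

lemma add_mul_div_le_one_sub_mul {β C L N : ℝ} (hβ1 : β < 1) (hL : 0 ≤ L)
    (hN : 0 < N) : C + β * (L / N) ≤ (1 - β) * (C / (1 - β) + L / (N * (1 - β))) := by
  have hG : (1 - β) * (C / (1 - β) + L / (N * (1 - β))) = C + L / N := by
    field_simp [(sub_pos.2 hβ1).ne']
  rw [hG]
  gcongr
  exact mul_le_of_le_one_left (by positivity) hβ1.le

lemma Real.prod_one_add_le_tprod {ι : Type*} {g : ι → ℝ} (hg : ∀ i, 0 ≤ g i) (hs : Summable g)
    (s : Finset ι) : ∏ i ∈ s, (1 + g i) ≤ ∏' i, (1 + g i) := by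
  have hpos : ∀ i, 0 < 1 + g i := fun i => by linarith [hg i]
  have hlog := Real.summable_log_one_add_of_summable hs
  rw [← Real.rexp_tsum_eq_tprod hpos hlog, ← exp_log (prod_pos fun i _ => hpos i),
    log_prod fun i _ => (hpos i).ne']
  exact exp_le_exp.2 (hlog.sum_le_tsum s fun i _ => log_nonneg (by linarith [hg i]))

theorem stsql_iterates_uniformly_bounded_general [Fintype S] [Fintype A] [Nonempty S] [Nonempty A]
    [DecidableEq S] [DecidableEq A]
    (β Cmax : ℝ) (hβ0 : 0 ≤ β) (hβ1 : β < 1)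
    (N : ℝ) (hN : 0 < N)
    (Q : ℕ → S × A → ℝ) (sa : ℕ → S × A) (j k : ℕ → S) (c' c'' α θ : ℕ → ℝ)
    (hc' : ∀ n, |c' n| ≤ Cmax) (hc'' : ∀ n, |c'' n| ≤ Cmax)
    (hα0 : ∀ n, 0 ≤ α n) (hα1 : ∀ n, α n ≤ 1)
    (hθmono : Antitone fun n => |θ n|)
    (hsum : Summable fun n => α n * |θ n|)
    (hupd : ∀ n, Q (n + 1) =
      stsqlUpdate β N (Q n) (sa n) (j n) (k n) (c' n) (c'' n) (α n) (θ n))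
    (hQ0 : maxNorm (Q 0) ≤ Cmax / (1 - β)) :
    ∃ D : ℝ, D = (Cmax / (1 - β) + Real.log (Fintype.card A) / (N * (1 - β))) *
        (1 + β * |θ 0|) * (∏' i : ℕ, (1 + α (i + 1) * β ^ 2 * |θ (i + 1)|)) ∧
      ∀ n : ℕ, maxNorm (Q n) ≤ D := by
  set G := Cmax / (1 - β) + log (Fintype.card A) / (N * (1 - β))
  have hlogA : 0 ≤ log (Fintype.card A) := log_nonneg (by exact_mod_cast Fintype.card_pos)
  have hQ0G : maxNorm (Q 0) ≤ G := hQ0.trans (le_add_of_nonneg_right (by bound))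
  have hG : 0 ≤ G := (abs_nonneg _).trans ((abs_le_maxNorm _ (Classical.arbitrary _)).trans hQ0G)
  have hbound := le_mul_prod_of_le_stsqlStepBound hα0 hα1 hβ0 hβ1.le hθmono
    (add_mul_div_le_one_sub_mul hβ1 hlogA hN) hG hQ0G fun n B hB =>
      hupd n ▸ maxNorm_stsqlUpdate_le _ hβ0 hN (hα0 n) (hα1 n) (hc' n) (hc'' n) hB _ _ _
  have hsum' : Summable fun i => α (i + 1) * |θ (i + 1)| := (summable_nat_add_iff 1).2 hsum
  have hprod := Real.prod_one_add_le_tprod (g := fun i => α (i + 1) * β ^ 2 * |θ (i + 1)|)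
    (fun i => by have := hα0 (i + 1); positivity)
    ((hsum'.mul_left (β ^ 2)).congr fun i => by ring)
  have hK : 0 ≤ G * (1 + β * |θ 0|) := by positivity
  refine ⟨_, rfl, ?_⟩
  rintro (_ | n)
  · calc maxNorm (Q 0) ≤ G := hQ0G
      _ ≤ G * (1 + β * |θ 0|) := le_mul_of_one_le_right hG (by bound)
      _ ≤ _ := le_mul_of_one_le_right hK (by simpa using hprod ∅)
  · exact (hbound n).trans (mul_le_mul_of_nonneg_left (hprod _) hK)

/-- Under `‖Q₀‖ ≤ C_max/(1−β)`, `|θₙ| ≤ 1`, `|θₙ| ↓ 0`, and `∑ₙ αₙ|θₙ| < ∞`, the S-TSQL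
iterates are uniformly bounded by
`D = (C_max/(1−β) + log|A|/(N(1−β)))(1 + β|θ₀|) ∏_{i=1}^∞ (1 + αᵢ β² |θᵢ|)`. -/
theorem stsql_iterates_uniformly_bounded [Fintype S] [Fintype A] [Nonempty S] [Nonempty A]
    [DecidableEq S] [DecidableEq A]
    (β Cmax : ℝ) (hβ0 : 0 ≤ β) (hβ1 : β < 1) (hC : 0 ≤ Cmax)
    (N : ℝ) (hN : 0 < N)
    (Q : ℕ → S × A → ℝ) (sa : ℕ → S × A) (j k : ℕ → S) (c' c'' α θ : ℕ → ℝ)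
    (hc' : ∀ n, |c' n| ≤ Cmax) (hc'' : ∀ n, |c'' n| ≤ Cmax)
    (hα0 : ∀ n, 0 ≤ α n) (hα1 : ∀ n, α n ≤ 1)
    (hθ1 : ∀ n, |θ n| ≤ 1) (hθmono : Antitone fun n => |θ n|)
    (hθ0 : Tendsto (fun n => |θ n|) atTop (nhds 0))
    (hsum : Summable fun n => α n * |θ n|)
    (hupd : ∀ n, Q (n + 1) =
      stsqlUpdate β N (Q n) (sa n) (j n) (k n) (c' n) (c'' n) (α n) (θ n))
    (hQ0 : maxNorm (Q 0) ≤ Cmax / (1 - β)) :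
    ∃ D : ℝ, D = (Cmax / (1 - β) + Real.log (Fintype.card A) / (N * (1 - β))) *
        (1 + β * |θ 0|) * (∏' i : ℕ, (1 + α (i + 1) * β ^ 2 * |θ (i + 1)|)) ∧
      ∀ n : ℕ, maxNorm (Q n) ≤ D :=
  stsql_iterates_uniformly_bounded_general β Cmax hβ0 hβ1 N hN Q sa j k c' c'' α θ hc' hc'' hα0 hα1
    hθmono hsum hupd hQ0
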